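/- For b > √3, the hyperbolic edge length ℓ of the cube P(b) with vertices (1/3)(b - √(b²-3))(±1,±1,±1) satisfies cosh ℓ = 1 + 2/(b²-3). -/

import Mathlib

/-- The inverse hyperbolic cosine. -/
noncomputable def arcosh (x : ℝ) : ℝ := Real.log (x + Real.sqrt (x^2 - 1))

/-- The hyperbolic distance between two points of the Poincaré ball model,
given by `cosh d(p,q) = 1 + 2|p-q|²/((1-|p|²)(1-|q|²))`. -/
noncomputable def ballDist (p q : EuclideanSpace ℝ (Fin 3)) : ℝ :=
  arcosh (1 + 2 * dist p q ^ 2 / ((1 - ‖p‖^2) * (1 - ‖q‖^2)))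

/-- A point of `ℝ³` given by its coordinates. -/
noncomputable def v3 (x y z : ℝ) : EuclideanSpace ℝ (Fin 3) :=
  (WithLp.equiv 2 (Fin 3 → ℝ)).symm ![x, y, z]

/-!
The vertices are `t (±1,±1,±1)` with `t = (b - s)/3` and `s = √(b²-3)`. Two adjacent vertices
are at Euclidean distance `2t` and both have squared norm `3t²`, so
`cosh ℓ = 1 + 8t²/(1 - 3t²)²`. The choice of `t` makes `1 - 3t² = 2st`, which turns this
into `1 + 2/s²`.
-/

lemma cosh_arcosh {x : ℝ} (hx : 1 ≤ x) : Real.cosh (arcosh x) = x := by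
  have hsq : Real.sqrt (x ^ 2 - 1) ^ 2 = x ^ 2 - 1 := Real.sq_sqrt (by nlinarith)
  have hpos : 0 < x + Real.sqrt (x ^ 2 - 1) := by positivity
  rw [arcosh, Real.cosh_eq, Real.exp_neg, Real.exp_log hpos]
  field_simp
  linear_combination hsq

lemma cosh_ballDist {p q : EuclideanSpace ℝ (Fin 3)} (hp : ‖p‖ < 1) (hq : ‖q‖ < 1) :
    Real.cosh (ballDist p q) = 1 + 2 * dist p q ^ 2 / ((1 - ‖p‖ ^ 2) * (1 - ‖q‖ ^ 2)) := by
  have hp' : 0 < 1 - ‖p‖ ^ 2 := by nlinarith [norm_nonneg p]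
  have hq' : 0 < 1 - ‖q‖ ^ 2 := by nlinarith [norm_nonneg q]
  exact cosh_arcosh (le_add_of_nonneg_right (by positivity))

lemma dist_v3_sq (x y z x' y' z' : ℝ) :
    dist (v3 x y z) (v3 x' y' z') ^ 2 = (x - x') ^ 2 + (y - y') ^ 2 + (z - z') ^ 2 := by
  rw [EuclideanSpace.dist_eq, Real.sq_sqrt (by positivity)]
  simp [v3, Fin.sum_univ_three, Real.dist_eq, sq_abs]

lemma norm_v3_sq (x y z : ℝ) : ‖v3 x y z‖ ^ 2 = x ^ 2 + y ^ 2 + z ^ 2 := by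
  rw [EuclideanSpace.norm_eq, Real.sq_sqrt (by positivity)]
  simp [v3, Fin.sum_univ_three, sq_abs]

lemma norm_v3_lt_one {x y z : ℝ} (h : x ^ 2 + y ^ 2 + z ^ 2 < 1) : ‖v3 x y z‖ < 1 :=
  (sq_lt_one_iff₀ (norm_nonneg _)).mp (by rwa [norm_v3_sq])

lemma cosh_ballDist_v3_adjacent {t : ℝ} (ht : 3 * t ^ 2 < 1) :
    Real.cosh (ballDist (v3 t t t) (v3 t t (-t))) = 1 + 8 * t ^ 2 / (1 - 3 * t ^ 2) ^ 2 := by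
  rw [cosh_ballDist (norm_v3_lt_one (by linarith)) (norm_v3_lt_one (by nlinarith)),
    dist_v3_sq, norm_v3_sq, norm_v3_sq]
  ring

/-- For `b > √3`, the hyperbolic edge length `ℓ` of the cube `P(b)`, i.e. the
hyperbolic distance between the adjacent vertices `(1/3)(b-√(b²-3))(1,1,1)` and
`(1/3)(b-√(b²-3))(1,1,-1)`, satisfies `cosh ℓ = 1 + 2/(b²-3)`. -/
theorem cube_edge_length (b : ℝ) (hb : Real.sqrt 3 < b) :
    Real.cosh (ballDist
      (v3 ((b - Real.sqrt (b^2-3))/3) ((b - Real.sqrt (b^2-3))/3) ((b - Real.sqrt (b^2-3))/3))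
      (v3 ((b - Real.sqrt (b^2-3))/3) ((b - Real.sqrt (b^2-3))/3) (-((b - Real.sqrt (b^2-3))/3)))) =
    1 + 2/(b^2-3) := by
  have hb0 : 0 < b := (Real.sqrt_nonneg 3).trans_lt hb
  have hb3 : 3 < b ^ 2 := by simpa using (Real.sqrt_lt' hb0).mp hb
  set s := Real.sqrt (b ^ 2 - 3)
  have hs2 : s ^ 2 = b ^ 2 - 3 := Real.sq_sqrt (by linarith)
  have hs : 0 < s := Real.sqrt_pos.mpr (by linarith)
  have hsb : s < b := by nlinarith
  set t := (b - s) / 3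
  have ht : 0 < t := by positivity
  have hcenter : 1 - 3 * t ^ 2 = 2 * s * t := by linear_combination (1 / 3 : ℝ) * hs2
  rw [cosh_ballDist_v3_adjacent (by nlinarith), hcenter, ← hs2]
  field_simp
  ring
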